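/- arXiv:1807.10799 — 6 statements merged into one kernel-verified Lean document; each statement's English description precedes it below -/
import Mathlib

section
/- Let 𝐚 = [a_{kj}]_{k,j=1}^3 be a real symmetric positive definite 3×3 matrix, κ₁ > 0 and ω ∈ ℝ. Then the function Γ(·,ω) satisfies the anisotropic Helmholtz equation pointwise away from the origin: for every x ∈ ℝ³ \ {0}, Σ_{k,j=1}^3 a_{kj} ∂²Γ(x,ω)/∂x_k∂x_j + ω² κ₁ Γ(x,ω) = 0. -/
/-! Writing `Γ(x) = G(q(x))` with `q(x) = 𝐚⁻¹x·x` and `G(t) = -exp(i c √t) / (C √t)`, where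
`c = ω √κ₁` and `C = 4π √(det 𝐚)`, the chain rule gives
`∂ₖ∂ⱼ Γ = 4 G''(q) (𝐚⁻¹x)ⱼ (𝐚⁻¹x)ₖ + 2 G'(q) (𝐚⁻¹)ⱼₖ`.
Contracting with `a_{kj}` and using `tr(𝐚 𝐚⁻¹) = 3` and `𝐚 𝐚⁻¹x · 𝐚⁻¹x = q` turns the
Helmholtz operator into `4 q G''(q) + 6 G'(q) + c² G(q)`, which vanishes because `G` solves the
radial Helmholtz equation written in the variable `t = r²`. -/

open MeasureTheory Filter
open scoped Topology BigOperators

noncomputable section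

/-- Three-dimensional Euclidean space. -/
abbrev E3 := EuclideanSpace ℝ (Fin 3)

/-- The inner product `𝐚⁻¹ x · x`. -/
def qf (a : Matrix (Fin 3) (Fin 3) ℝ) (x : E3) : ℝ :=
  ∑ i, a⁻¹.mulVec (fun j => x j) i * x i

/-- The radiating fundamental solution
`Γ(x,ω) = −exp(i ω κ₁^{1/2} (𝐚⁻¹x·x)^{1/2}) / (4π (det 𝐚)^{1/2} (𝐚⁻¹x·x)^{1/2})`. -/
def Gamma (a : Matrix (Fin 3) (Fin 3) ℝ) (κ₁ ω : ℝ) (x : E3) : ℂ :=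
  -Complex.exp (Complex.I * (ω : ℂ) * (Real.sqrt κ₁ : ℂ) * (Real.sqrt (qf a x) : ℂ)) /
    ((4 * Real.pi * Real.sqrt a.det * Real.sqrt (qf a x) : ℝ) : ℂ)

/-- Directional (partial) derivative `∂f/∂x_k`. -/
def pd (f : E3 → ℂ) (k : Fin 3) (x : E3) : ℂ :=
  fderiv ℝ f x (EuclideanSpace.single k 1)

section QuadraticForm

open Matrix WithLp

variable {a : Matrix (Fin 3) (Fin 3) ℝ}

variable (a) in
lemma qf_eq_dotProduct (x : E3) :
    qf a x = ofLp x ⬝ᵥ (a⁻¹ *ᵥ ofLp x) :=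
  dotProduct_comm _ _

variable (a) in
lemma qf_eq_reApplyInnerSelf (x : E3) :
    qf a x = (toEuclideanCLM (𝕜 := ℝ) a⁻¹).reApplyInnerSelf x := by
  rw [ContinuousLinearMap.reApplyInnerSelf_apply, RCLike.re_to_real, real_inner_comm,
    inner_toEuclideanCLM, qf_eq_dotProduct]

lemma hasFDerivAt_qf (ha : a.IsHermitian) (x : E3) :
    HasFDerivAt (qf a) (2 • innerSL ℝ (toEuclideanCLM (𝕜 := ℝ) a⁻¹ x)) x := by
  have hT : IsSelfAdjoint (toEuclideanCLM (𝕜 := ℝ) a⁻¹) :=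
    (isHermitian_iff_isSelfAdjoint.mp ha.inv).map _
  rw [funext (qf_eq_reApplyInnerSelf a)]
  exact (hT.isSymmetric.hasStrictFDerivAt_reApplyInnerSelf x).hasFDerivAt

lemma qf_pos (ha : a.PosDef) {x : E3} (hx : x ≠ 0) : 0 < qf a x := by
  rw [qf_eq_dotProduct]
  exact ha.inv.dotProduct_mulVec_pos (by simpa using hx)

lemma pd_comp_qf (ha : a.IsHermitian) {g : ℝ → ℂ} {g' : ℂ} {x : E3}
    (hg : HasDerivAt g g' (qf a x)) (j : Fin 3) :
    pd (fun y => g (qf a y)) j x = g' * (2 * (a⁻¹ *ᵥ ofLp x) j : ℝ) := by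
  have hcomp : HasFDerivAt (fun y => g (qf a y)) _ x :=
    hg.hasFDerivAt.comp x (hasFDerivAt_qf ha x)
  rw [pd, hcomp.fderiv]
  simp [EuclideanSpace.inner_single_right]
  ring

lemma pd_pd_comp_qf (ha : a.IsHermitian) {g g' : ℝ → ℂ} {g'' : ℂ} {x : E3}
    (hg : ∀ᶠ t in 𝓝 (qf a x), HasDerivAt g (g' t) t) (hg' : HasDerivAt g' g'' (qf a x))
    (j k : Fin 3) :
    pd (pd (fun y => g (qf a y)) j) k x =
      g'' * (4 * (a⁻¹ *ᵥ ofLp x) j * (a⁻¹ *ᵥ ofLp x) k : ℝ)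
        + g' (qf a x) * (2 * a⁻¹ j k : ℝ) := by
  have hpd : pd (fun y => g (qf a y)) j =ᶠ[𝓝 x]
      fun y => g' (qf a y) * (2 * (a⁻¹ *ᵥ ofLp y) j : ℝ) :=
    ((hasFDerivAt_qf ha x).continuousAt.eventually hg).mono fun y hy => pd_comp_qf ha hy j
  have hlin : HasFDerivAt (fun y : E3 => ((2 * (a⁻¹ *ᵥ ofLp y) j : ℝ) : ℂ)) _ x :=
    (Complex.ofRealCLM.comp ((2 : ℝ) • (EuclideanSpace.proj j).comp
      (toEuclideanCLM (𝕜 := ℝ) a⁻¹))).hasFDerivAt.congr_of_eventuallyEq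
      (.of_forall fun y => by simp)
  have hcomp : HasFDerivAt (fun y => g' (qf a y)) _ x :=
    hg'.hasFDerivAt.comp x (hasFDerivAt_qf ha x)
  rw [pd, hpd.fderiv_eq, (hcomp.fun_mul hlin).fderiv]
  simp [EuclideanSpace.inner_single_right]
  ring

lemma sum_mul_pd_pd_comp_qf (ha : a.IsHermitian) (hdet : IsUnit a.det) {g g' : ℝ → ℂ}
    {g'' : ℂ} {x : E3} (hg : ∀ᶠ t in 𝓝 (qf a x), HasDerivAt g (g' t) t)
    (hg' : HasDerivAt g' g'' (qf a x)) :
    ∑ k : Fin 3, ∑ j : Fin 3, (a k j : ℂ) * pd (pd (fun y => g (qf a y)) j) k x =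
      4 * qf a x * g'' + 6 * g' (qf a x) := by
  set w := a⁻¹ *ᵥ ofLp x
  have htrace : ∑ k : Fin 3, ∑ j : Fin 3, a k j * a⁻¹ j k = 3 := by
    have : trace (a * a⁻¹) = 3 := by simp [mul_nonsing_inv _ hdet]
    simpa [trace, mul_apply] using this
  have hquad : ∑ k : Fin 3, ∑ j : Fin 3, a k j * (w j * w k) = qf a x := calc
    _ = w ⬝ᵥ (a *ᵥ w) := by
      simp only [dotProduct, mulVec, Finset.mul_sum]
      exact Finset.sum_congr rfl fun k _ => Finset.sum_congr rfl fun j _ => by ring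
    _ = qf a x := by
      rw [mulVec_mulVec, mul_nonsing_inv _ hdet, one_mulVec, qf_eq_dotProduct, dotProduct_comm]
  calc _ = 4 * ((∑ k : Fin 3, ∑ j : Fin 3, a k j * (w j * w k) : ℝ) : ℂ) * g''
        + 2 * ((∑ k : Fin 3, ∑ j : Fin 3, a k j * a⁻¹ j k : ℝ) : ℂ) * g' (qf a x) := by
        simp only [pd_pd_comp_qf ha hg hg', Fin.sum_univ_three]
        push_cast
        ring
    _ = _ := by
        rw [hquad, htrace]
        push_cast
        ring

end QuadraticForm

section RadialProfile

open Complex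

def radialProfile (c C t : ℝ) : ℂ :=
  -exp (I * c * Real.sqrt t) / (C * Real.sqrt t)

def radialProfileDeriv (c C t : ℝ) : ℂ :=
  exp (I * c * Real.sqrt t) * (1 - I * c * Real.sqrt t) / (2 * C * t * Real.sqrt t)

def radialProfileDeriv2 (c C t : ℝ) : ℂ :=
  exp (I * c * Real.sqrt t) * (c ^ 2 * t - 3 * (1 - I * c * Real.sqrt t)) /
    (4 * C * t ^ 2 * Real.sqrt t)

lemma ofReal_eq_sqrt_sq {t : ℝ} (ht : 0 ≤ t) : (t : ℂ) = (Real.sqrt t : ℂ) ^ 2 := by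
  norm_cast
  exact (Real.sq_sqrt ht).symm

lemma hasDerivAt_ofReal_sqrt {t : ℝ} (ht : 0 < t) :
    HasDerivAt (fun s : ℝ => (Real.sqrt s : ℂ)) (1 / (2 * Real.sqrt t)) t := by
  simpa using (Real.hasDerivAt_sqrt ht.ne').ofReal_comp

lemma hasDerivAt_exp_sqrt (c : ℝ) {t : ℝ} (ht : 0 < t) :
    HasDerivAt (fun s : ℝ => exp (I * c * Real.sqrt s))
      (exp (I * c * Real.sqrt t) * (I * c / (2 * Real.sqrt t))) t := by
  convert ((hasDerivAt_ofReal_sqrt ht).const_mul (I * c)).cexp using 1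
  ring

lemma hasDerivAt_radialProfile (c : ℝ) {C t : ℝ} (hC : C ≠ 0) (ht : 0 < t) :
    HasDerivAt (radialProfile c C) (radialProfileDeriv c C t) t := by
  have hs : (Real.sqrt t : ℂ) ≠ 0 := by exact_mod_cast (Real.sqrt_pos.mpr ht).ne'
  have hC' : (C : ℂ) ≠ 0 := by exact_mod_cast hC
  refine ((hasDerivAt_exp_sqrt c ht).fun_neg.fun_div
    ((hasDerivAt_ofReal_sqrt ht).const_mul (C : ℂ)) (mul_ne_zero hC' hs)).congr_deriv ?_
  rw [radialProfileDeriv, ofReal_eq_sqrt_sq ht.le]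
  field_simp
  ring

lemma hasDerivAt_radialProfileDeriv (c : ℝ) {C t : ℝ} (hC : C ≠ 0) (ht : 0 < t) :
    HasDerivAt (radialProfileDeriv c C) (radialProfileDeriv2 c C t) t := by
  have hs : (Real.sqrt t : ℂ) ≠ 0 := by exact_mod_cast (Real.sqrt_pos.mpr ht).ne'
  have hC' : (C : ℂ) ≠ 0 := by exact_mod_cast hC
  have hden : HasDerivAt (fun s : ℝ => 2 * (C : ℂ) * s * Real.sqrt s)
      (2 * C * Real.sqrt t + 2 * C * t * (1 / (2 * Real.sqrt t))) t :=
    ((ofRealCLM.hasDerivAt.const_mul (2 * (C : ℂ))).mul (hasDerivAt_ofReal_sqrt ht)).congr_deriv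
      (by simp)
  have hnum := (hasDerivAt_exp_sqrt c ht).fun_mul
    (((hasDerivAt_ofReal_sqrt ht).const_mul (I * c)).const_sub 1)
  refine (hnum.fun_div hden (by simp [hC', hs, ht.ne'])).congr_deriv ?_
  rw [radialProfileDeriv2, ofReal_eq_sqrt_sq ht.le]
  field_simp
  linear_combination (-4 * (c : ℂ) ^ 2 * (Real.sqrt t : ℂ) ^ 2) * I_sq

lemma radialProfile_ode (c : ℝ) {C t : ℝ} (hC : C ≠ 0) (ht : 0 < t) :
    4 * t * radialProfileDeriv2 c C t + 6 * radialProfileDeriv c C t + c ^ 2 * radialProfile c C t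
      = 0 := by
  have hs : (Real.sqrt t : ℂ) ≠ 0 := by exact_mod_cast (Real.sqrt_pos.mpr ht).ne'
  have hC' : (C : ℂ) ≠ 0 := by exact_mod_cast hC
  rw [radialProfile, radialProfileDeriv, radialProfileDeriv2, ofReal_eq_sqrt_sq ht.le]
  field_simp
  ring

end RadialProfile

lemma Gamma_eq_radialProfile (a : Matrix (Fin 3) (Fin 3) ℝ) (κ₁ ω : ℝ) :
    Gamma a κ₁ ω =
      fun x => radialProfile (ω * Real.sqrt κ₁) (4 * Real.pi * Real.sqrt a.det) (qf a x) := by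
  funext x
  simp only [Gamma, radialProfile]
  push_cast
  ring_nf

theorem stmt0_general (a : Matrix (Fin 3) (Fin 3) ℝ) (ha : a.PosDef)
    (κ₁ ω : ℝ) (hκ : 0 < κ₁) (x : E3) (hx : x ≠ 0) :
    ∑ k : Fin 3, ∑ j : Fin 3, (a k j : ℂ) * pd (pd (Gamma a κ₁ ω) j) k x
      + (ω : ℂ) ^ 2 * (κ₁ : ℂ) * Gamma a κ₁ ω x = 0 := by
  set c := ω * Real.sqrt κ₁
  set C := 4 * Real.pi * Real.sqrt a.det
  have hC : C ≠ 0 := by have := Real.sqrt_pos.mpr ha.det_pos; positivity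
  have hq := qf_pos ha hx
  have hg : ∀ᶠ t in 𝓝 (qf a x), HasDerivAt (radialProfile c C) (radialProfileDeriv c C t) t :=
    (eventually_gt_nhds hq).mono fun t ht => hasDerivAt_radialProfile c hC ht
  have hc : (ω : ℂ) ^ 2 * κ₁ = (c : ℂ) ^ 2 := by
    simp only [c, Complex.ofReal_mul, mul_pow, ← Complex.ofReal_pow, Real.sq_sqrt hκ.le]
  rw [Gamma_eq_radialProfile,
    sum_mul_pd_pd_comp_qf ha.isHermitian ha.det_pos.ne'.isUnit hg
      (hasDerivAt_radialProfileDeriv c hC hq), hc]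
  linear_combination radialProfile_ode c hC hq

/-- `Γ(·,ω)` satisfies the anisotropic Helmholtz equation
`Σ a_{kj} ∂²Γ/∂x_k∂x_j + ω²κ₁ Γ = 0` pointwise on `ℝ³ \ {0}`. -/
theorem stmt0 (a : Matrix (Fin 3) (Fin 3) ℝ) (ha : a.PosDef) (hsym : a.IsSymm)
    (κ₁ ω : ℝ) (hκ : 0 < κ₁) (x : E3) (hx : x ≠ 0) :
    ∑ k : Fin 3, ∑ j : Fin 3, (a k j : ℂ) * pd (pd (Gamma a κ₁ ω) j) k x
      + (ω : ℂ) ^ 2 * (κ₁ : ℂ) * Gamma a κ₁ ω x = 0 :=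
  stmt0_general a ha κ₁ ω hκ x hx
end
end

section
/- Let 𝐚 = [a_{kj}]_{k,j=1}^3 be a real symmetric positive definite 3×3 matrix, κ₁ > 0 and ω > 0. For every compact set K ⊂ ℝ³ there exist constants C > 0 and R > 0 such that for all x ∈ K and all y ∈ ℝ³ with |y| ≥ R, writing η = y/|y|, one has the far-field asymptotics | Γ(y−x,ω) − c(ξ(η)) exp(i ξ(η)·(y−x)) / |y| | ≤ C/|y|². -/
open MeasureTheory Filter
open scoped Topology BigOperators

noncomputable section

/-- `ξ(η) = ω κ₁^{1/2} (𝐚⁻¹η·η)^{−1/2} 𝐚⁻¹η` for a (unit) vector `η`. -/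
def xiVec (a : Matrix (Fin 3) (Fin 3) ℝ) (κ₁ ω : ℝ) (η : Fin 3 → ℝ) : Fin 3 → ℝ :=
  (ω * Real.sqrt κ₁ * (Real.sqrt (∑ i, a⁻¹.mulVec η i * η i))⁻¹) • a⁻¹.mulVec η

/-- The far-field coefficient `c(ξ) = −|𝐚ξ| / (4π ω κ₁^{1/2} (det 𝐚)^{1/2})`. -/
def ffc (a : Matrix (Fin 3) (Fin 3) ℝ) (κ₁ ω : ℝ) (ξ : Fin 3 → ℝ) : ℝ :=
  -Real.sqrt (∑ k, (a.mulVec ξ k) ^ 2) /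
    (4 * Real.pi * ω * Real.sqrt κ₁ * Real.sqrt a.det)

/-! Write `𝐚⁻¹ = S²` with `S = 𝐚^{-1/2}`, so that `(𝐚⁻¹z·z)^{1/2} = |Sz|`. Since `ξ(η)` does not
change when `η` is scaled by a positive factor, with `u = Sy`, `w = Sx` and `λ = ωκ₁^{1/2}` the
far-field term is `−exp(iλ⟨u, u − w⟩/|u|) / (4π(det 𝐚)^{1/2}|u|)`, while
`Γ(y − x) = −exp(iλ|u − w|) / (4π(det 𝐚)^{1/2}|u − w|)`. The estimate is then Euclidean geometry:
for `2|w| ≤ |u|` the identity `|u − w|² − (⟨u, u − w⟩/|u|)² = |w|² − (⟨u, w⟩/|u|)²` gives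
`||u − w| − ⟨u, u − w⟩/|u|| ≤ |w|²/|u|` for the phases, `||u − w| − |u|| ≤ |w|` for the
amplitudes, and `|u| ≍ |y|`, `|w| = O(1)` on `K`. -/

open Matrix
open scoped MatrixOrder RealInnerProductSpace

section SqrtFactor

variable {n : Type*} [Fintype n] [DecidableEq n] {A : Matrix n n ℝ}

theorem inner_toEuclideanCLM_sqrt (hA : A.PosSemidef) (x y : EuclideanSpace ℝ n) :
    ⟪toEuclideanCLM (𝕜 := ℝ) (CFC.sqrt A) x, toEuclideanCLM (𝕜 := ℝ) (CFC.sqrt A) y⟫ =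
      x.ofLp ⬝ᵥ A *ᵥ y.ofLp := by
  rw [← ContinuousLinearMap.adjoint_inner_right, ← ContinuousLinearMap.star_eq_adjoint, ← map_star,
    (CFC.sqrt_nonneg A).isSelfAdjoint.star_eq, ← ContinuousLinearMap.comp_apply,
    ← ContinuousLinearMap.mul_def, ← map_mul, CFC.sqrt_mul_sqrt_self _ hA.nonneg,
    inner_toEuclideanCLM]

theorem exists_norm_le_mul_norm_toEuclideanCLM_sqrt (hA : A.PosDef) :
    ∃ L > 0, ∀ x : EuclideanSpace ℝ n, ‖x‖ ≤ L * ‖toEuclideanCLM (𝕜 := ℝ) (CFC.sqrt A) x‖ := by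
  set T := toEuclideanCLM (𝕜 := ℝ) (CFC.sqrt A)
  have hinj : Function.Injective (T : EuclideanSpace ℝ n →ₗ[ℝ] EuclideanSpace ℝ n) := by
    rw [← LinearMap.ker_eq_bot, LinearMap.ker_eq_bot']
    intro x hx
    by_contra hne
    have hpos := hA.dotProduct_mulVec_pos (x := x.ofLp) (by simpa using hne)
    have h0 : ⟪T x, T x⟫ = 0 := by simp [show T x = 0 from hx]
    rw [inner_toEuclideanCLM_sqrt hA.posSemidef] at h0
    simp [h0] at hpos
  obtain ⟨L, hL, hanti⟩ := (LinearMap.injective_iff_antilipschitz _).mp hinj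
  exact ⟨L, hL, ZeroHomClass.bound_of_antilipschitz _ hanti⟩

end SqrtFactor

section Wave

variable {F : Type*} [NormedAddCommGroup F] [InnerProductSpace ℝ F]

theorem abs_norm_sub_sub_inner_div_norm_le {u w : F} (h : 2 * ‖w‖ ≤ ‖u‖) :
    |‖u - w‖ - ⟪u, u - w⟫ / ‖u‖| ≤ ‖w‖ ^ 2 / ‖u‖ := by
  rcases (norm_nonneg u).eq_or_lt with hu | hu
  · obtain rfl : u = 0 := norm_eq_zero.mp hu.symm
    obtain rfl : w = 0 := norm_le_zero_iff.mp (by rw [norm_zero] at h; linarith)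
    simp
  have hP : ⟪u, u - w⟫ / ‖u‖ = ‖u‖ - ⟪u, w⟫ / ‖u‖ := by
    rw [inner_sub_right, real_inner_self_eq_norm_sq]; field_simp
  have ht : |⟪u, w⟫ / ‖u‖| ≤ ‖w‖ := by
    rw [abs_div, abs_norm, div_le_iff₀ hu, mul_comm]; exact abs_real_inner_le_norm u w
  have hsq : ‖u - w‖ ^ 2 = ‖u‖ ^ 2 - 2 * ⟪u, w⟫ + ‖w‖ ^ 2 := norm_sub_sq_real u w
  rw [hP]
  set t := ⟪u, w⟫ / ‖u‖ with ht_def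
  set P := ‖u‖ - t
  have hdiff_sq : (‖u - w‖ - P) * (‖u - w‖ + P) = ‖w‖ ^ 2 - t ^ 2 := by
    simp only [P, ht_def]; field_simp; linear_combination ‖u‖ ^ 2 * hsq
  have hsum : ‖u‖ ≤ ‖u - w‖ + P := by linarith [norm_sub_norm_le u w, le_abs_self t]
  have hdiff : 0 ≤ ‖u - w‖ - P := by
    refine nonneg_of_mul_nonneg_left ?_ (hu.trans_le hsum)
    rw [hdiff_sq, sub_nonneg, sq_le_sq, abs_norm]; exact ht
  rw [abs_of_nonneg hdiff, le_div_iff₀ hu]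
  calc (‖u - w‖ - P) * ‖u‖ ≤ (‖u - w‖ - P) * (‖u - w‖ + P) :=
        mul_le_mul_of_nonneg_left hsum hdiff
    _ = ‖w‖ ^ 2 - t ^ 2 := hdiff_sq
    _ ≤ ‖w‖ ^ 2 := sub_le_self _ (sq_nonneg t)

theorem norm_exp_I_mul_sub_exp_I_mul_le (θ φ : ℝ) :
    ‖Complex.exp (Complex.I * θ) - Complex.exp (Complex.I * φ)‖ ≤ |θ - φ| := by
  have h : Complex.exp (Complex.I * θ) - Complex.exp (Complex.I * φ) =
      Complex.exp (Complex.I * φ) * (Complex.exp (Complex.I * ↑(θ - φ)) - 1) := by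
    rw [mul_sub, mul_one, ← Complex.exp_add]; push_cast; ring_nf
  rw [h, norm_mul, Complex.norm_exp_I_mul_ofReal, one_mul]
  simpa using Real.norm_exp_I_mul_ofReal_sub_one_le (x := θ - φ)

theorem norm_exp_div_sub_exp_div_le (θ φ : ℝ) {s r : ℝ} (hs : 0 < s) (hr : 0 < r) :
    ‖Complex.exp (Complex.I * θ) / s - Complex.exp (Complex.I * φ) / r‖ ≤
      |θ - φ| / s + |r - s| / (r * s) := by
  have h : Complex.exp (Complex.I * θ) / s - Complex.exp (Complex.I * φ) / r =
      (Complex.exp (Complex.I * θ) - Complex.exp (Complex.I * φ)) / s +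
        Complex.exp (Complex.I * φ) * ↑((r - s) / (r * s)) := by
    have : (s : ℂ) ≠ 0 := by exact_mod_cast hs.ne'
    have : (r : ℂ) ≠ 0 := by exact_mod_cast hr.ne'
    push_cast; field_simp; ring
  rw [h]
  refine (norm_add_le _ _).trans (add_le_add ?_ ?_)
  · rw [norm_div, Complex.norm_real, Real.norm_of_nonneg hs.le]
    gcongr
    exact norm_exp_I_mul_sub_exp_I_mul_le θ φ
  · rw [norm_mul, Complex.norm_exp_I_mul_ofReal, one_mul, Complex.norm_real, Real.norm_eq_abs,
      abs_div, abs_of_pos (mul_pos hr hs)]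

theorem norm_sphericalWave_sub_planeWave_le {k : ℝ} (hk : 0 ≤ k) {u w : F} (hu : u ≠ 0)
    (h : 2 * ‖w‖ ≤ ‖u‖) :
    ‖Complex.exp (Complex.I * ↑(k * ‖u - w‖)) / ↑‖u - w‖ -
        Complex.exp (Complex.I * ↑(k * (⟪u, u - w⟫ / ‖u‖))) / ↑‖u‖‖ ≤
      2 * ‖w‖ * (k * ‖w‖ + 1) / ‖u‖ ^ 2 := by
  have hr : 0 < ‖u‖ := norm_pos_iff.mpr hu
  have hs : ‖u‖ / 2 ≤ ‖u - w‖ := by linarith [norm_sub_norm_le u w]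
  have hs0 : 0 < ‖u - w‖ := by linarith
  have hphase : |k * ‖u - w‖ - k * (⟪u, u - w⟫ / ‖u‖)| ≤ k * (‖w‖ ^ 2 / ‖u‖) := by
    rw [← mul_sub, abs_mul, abs_of_nonneg hk]
    exact mul_le_mul_of_nonneg_left (abs_norm_sub_sub_inner_div_norm_le h) hk
  have hamp : |‖u‖ - ‖u - w‖| ≤ ‖w‖ := by
    simpa using abs_norm_sub_norm_le u (u - w)
  calc _ ≤ _ := norm_exp_div_sub_exp_div_le _ _ hs0 hr
    _ ≤ k * (‖w‖ ^ 2 / ‖u‖) / (‖u‖ / 2) + ‖w‖ / (‖u‖ * (‖u‖ / 2)) := by gcongr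
    _ = 2 * ‖w‖ * (k * ‖w‖ + 1) / ‖u‖ ^ 2 := by field_simp

end Wave

def invSqrtCLM (a : Matrix (Fin 3) (Fin 3) ℝ) : E3 →L[ℝ] E3 :=
  toEuclideanCLM (𝕜 := ℝ) (CFC.sqrt a⁻¹)

section FarField

variable {a : Matrix (Fin 3) (Fin 3) ℝ} {κ₁ ω : ℝ}

theorem inner_invSqrtCLM (ha : a.PosDef) (v z : E3) :
    ⟪invSqrtCLM a v, invSqrtCLM a z⟫ = (a⁻¹ *ᵥ z.ofLp) ⬝ᵥ v.ofLp := by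
  rw [invSqrtCLM, inner_toEuclideanCLM_sqrt ha.inv.posSemidef, dotProduct_comm]

theorem qf_eq_norm_sq (ha : a.PosDef) (z : E3) : qf a z = ‖invSqrtCLM a z‖ ^ 2 := by
  rw [← real_inner_self_eq_norm_sq, inner_invSqrtCLM ha]
  rfl

theorem sqrt_qf (ha : a.PosDef) (z : E3) : Real.sqrt (qf a z) = ‖invSqrtCLM a z‖ := by
  rw [qf_eq_norm_sq ha, Real.sqrt_sq (norm_nonneg _)]

theorem Gamma_eq (ha : a.PosDef) (z : E3) :
    Gamma a κ₁ ω z = -((4 * Real.pi * Real.sqrt a.det : ℝ) : ℂ)⁻¹ *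
      (Complex.exp (Complex.I * ↑(ω * Real.sqrt κ₁ * ‖invSqrtCLM a z‖)) / ↑‖invSqrtCLM a z‖) := by
  rw [Gamma, sqrt_qf ha]
  push_cast
  ring_nf

theorem xiVec_smul {t : ℝ} (ht : 0 < t) (η : Fin 3 → ℝ) :
    xiVec a κ₁ ω (t • η) = xiVec a κ₁ ω η := by
  have hq : ∑ i, (a⁻¹ *ᵥ (t • η)) i * (t • η) i = t ^ 2 * ∑ i, (a⁻¹ *ᵥ η) i * η i := by
    simp only [mulVec_smul, Pi.smul_apply, smul_eq_mul, Finset.mul_sum]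
    exact Finset.sum_congr rfl fun i _ => by ring
  rw [xiVec, xiVec, hq, Real.sqrt_mul (sq_nonneg t), Real.sqrt_sq ht.le, mulVec_smul, smul_smul]
  congr 1
  field_simp

theorem xiVec_eq (ha : a.PosDef) (v : E3) :
    xiVec a κ₁ ω v.ofLp = (ω * Real.sqrt κ₁ / ‖invSqrtCLM a v‖) • (a⁻¹ *ᵥ v.ofLp) := by
  rw [xiVec, ← sqrt_qf ha]
  rfl

theorem sum_xiVec_mul (ha : a.PosDef) (v z : E3) :
    ∑ j, xiVec a κ₁ ω v.ofLp j * z j =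
      ω * Real.sqrt κ₁ * (⟪invSqrtCLM a v, invSqrtCLM a z⟫ / ‖invSqrtCLM a v‖) := by
  rw [real_inner_comm, inner_invSqrtCLM ha, xiVec_eq ha]
  simp only [Pi.smul_apply, smul_eq_mul, dotProduct, Finset.sum_div, Finset.mul_sum]
  exact Finset.sum_congr rfl fun j _ => by ring

theorem ffc_xiVec (ha : a.PosDef) (hκ : 0 < κ₁) (hω : 0 < ω) (v : E3) :
    ffc a κ₁ ω (xiVec a κ₁ ω v.ofLp) =
      -‖v‖ / (4 * Real.pi * Real.sqrt a.det * ‖invSqrtCLM a v‖) := by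
  have hmul : a *ᵥ xiVec a κ₁ ω v.ofLp = (ω * Real.sqrt κ₁ / ‖invSqrtCLM a v‖) • v.ofLp := by
    rw [xiVec_eq ha, mulVec_smul, mulVec_mulVec,
      mul_nonsing_inv _ ((isUnit_iff_isUnit_det a).mp ha.isUnit), one_mulVec]
  have hnorm : ∑ k, (a *ᵥ xiVec a κ₁ ω v.ofLp) k ^ 2 =
      (ω * Real.sqrt κ₁ / ‖invSqrtCLM a v‖ * ‖v‖) ^ 2 := by
    simp only [hmul, Pi.smul_apply, smul_eq_mul, mul_pow, ← Finset.mul_sum,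
      EuclideanSpace.real_norm_sq_eq]
  rw [ffc, hnorm, Real.sqrt_sq (by positivity)]
  field_simp

theorem farField_eq (ha : a.PosDef) (hκ : 0 < κ₁) (hω : 0 < ω) {y : E3} (hy : y ≠ 0)
    (x : E3) :
    ((ffc a κ₁ ω (xiVec a κ₁ ω (fun i => ‖y‖⁻¹ * y i)) : ℝ) : ℂ) *
        Complex.exp (Complex.I *
          ((∑ k, xiVec a κ₁ ω (fun i => ‖y‖⁻¹ * y i) k * (y k - x k) : ℝ) : ℂ)) /
        ((‖y‖ : ℝ) : ℂ) =
      -((4 * Real.pi * Real.sqrt a.det : ℝ) : ℂ)⁻¹ *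
        (Complex.exp (Complex.I * ↑(ω * Real.sqrt κ₁ *
          (⟪invSqrtCLM a y, invSqrtCLM a y - invSqrtCLM a x⟫ / ‖invSqrtCLM a y‖))) /
          ↑‖invSqrtCLM a y‖) := by
  have hξ : xiVec a κ₁ ω (fun i => ‖y‖⁻¹ * y i) = xiVec a κ₁ ω y.ofLp :=
    xiVec_smul (inv_pos.mpr (norm_pos_iff.mpr hy)) y.ofLp
  have hphase : ∑ k, xiVec a κ₁ ω y.ofLp k * (y k - x k) =
      ω * Real.sqrt κ₁ * (⟪invSqrtCLM a y, invSqrtCLM a (y - x)⟫ / ‖invSqrtCLM a y‖) :=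
    sum_xiVec_mul ha y (y - x)
  have hy' : ((‖y‖ : ℝ) : ℂ) ≠ 0 := by exact_mod_cast norm_ne_zero_iff.mpr hy
  rw [hξ, hphase, ffc_xiVec ha hκ hω, map_sub]
  push_cast
  field_simp

end FarField

theorem stmt4_general (a : Matrix (Fin 3) (Fin 3) ℝ) (ha : a.PosDef)
    (κ₁ ω : ℝ) (hκ : 0 < κ₁) (hω : 0 < ω) :
    ∀ K : Set E3, IsCompact K → ∃ C > (0 : ℝ), ∃ R > (0 : ℝ),
      ∀ x ∈ K, ∀ y : E3, R ≤ ‖y‖ →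
        ‖Gamma a κ₁ ω (y - x)
            - ((ffc a κ₁ ω (xiVec a κ₁ ω (fun i => ‖y‖⁻¹ * y i)) : ℝ) : ℂ) *
                Complex.exp (Complex.I *
                  ((∑ k, xiVec a κ₁ ω (fun i => ‖y‖⁻¹ * y i) k * (y k - x k) : ℝ) : ℂ)) /
                ((‖y‖ : ℝ) : ℂ)‖ ≤ C / ‖y‖ ^ 2 := by
  intro K hK
  set T := invSqrtCLM a
  set k := ω * Real.sqrt κ₁
  set D := 4 * Real.pi * Real.sqrt a.det
  have hk : 0 < k := mul_pos hω (Real.sqrt_pos.mpr hκ)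
  have hD : 0 < D := by have := ha.det_pos; positivity
  obtain ⟨L, hL, hLT⟩ := exists_norm_le_mul_norm_toEuclideanCLM_sqrt ha.inv
  obtain ⟨W, hW, hWK⟩ := (hK.image T.continuous).isBounded.exists_pos_norm_le
  refine ⟨2 * W * (k * W + 1) * L ^ 2 / D, by positivity, 2 * L * W, by positivity,
    fun x hx y hyR => ?_⟩
  have hy : 0 < ‖y‖ := lt_of_lt_of_le (by positivity) hyR
  have hTx : ‖T x‖ ≤ W := hWK _ (Set.mem_image_of_mem T hx)
  have hyTy : ‖y‖ / L ≤ ‖T y‖ := by rw [div_le_iff₀' hL]; exact hLT y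
  have hTxy : 2 * ‖T x‖ ≤ ‖T y‖ := by
    have : 2 * W ≤ ‖y‖ / L := by rw [le_div_iff₀' hL]; linarith
    linarith
  have hTy : T y ≠ 0 := norm_pos_iff.mp ((div_pos hy hL).trans_le hyTy)
  rw [Gamma_eq ha, farField_eq ha hκ hω (norm_pos_iff.mp hy), map_sub, ← mul_sub,
    norm_mul, norm_neg, norm_inv, Complex.norm_real, Real.norm_of_nonneg hD.le]
  calc _ ≤ D⁻¹ * (2 * ‖T x‖ * (k * ‖T x‖ + 1) / ‖T y‖ ^ 2) := by
        gcongr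
        exact norm_sphericalWave_sub_planeWave_le hk.le hTy hTxy
    _ ≤ D⁻¹ * (2 * W * (k * W + 1) / (‖y‖ / L) ^ 2) := by gcongr
    _ = _ := by field_simp

/-- far-field asymptotics of `Γ`: for every compact `K ⊂ ℝ³` there are
`C > 0`, `R > 0` such that for `x ∈ K`, `|y| ≥ R`, `η = y/|y|`,
`|Γ(y−x,ω) − c(ξ(η)) exp(i ξ(η)·(y−x))/|y| | ≤ C/|y|²`. -/
theorem stmt4 (a : Matrix (Fin 3) (Fin 3) ℝ) (ha : a.PosDef) (hsym : a.IsSymm)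
    (κ₁ ω : ℝ) (hκ : 0 < κ₁) (hω : 0 < ω) :
    ∀ K : Set E3, IsCompact K → ∃ C > (0 : ℝ), ∃ R > (0 : ℝ),
      ∀ x ∈ K, ∀ y : E3, R ≤ ‖y‖ →
        ‖Gamma a κ₁ ω (y - x)
            - ((ffc a κ₁ ω (xiVec a κ₁ ω (fun i => ‖y‖⁻¹ * y i)) : ℝ) : ℂ) *
                Complex.exp (Complex.I *
                  ((∑ k, xiVec a κ₁ ω (fun i => ‖y‖⁻¹ * y i) k * (y k - x k) : ℝ) : ℂ)) /
                ((‖y‖ : ℝ) : ℂ)‖ ≤ C / ‖y‖ ^ 2 :=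
  stmt4_general a ha κ₁ ω hκ hω
end
end

section
/- Let 𝐚 = [a_{kj}]_{k,j=1}^3 be a real symmetric positive definite 3×3 matrix, κ₁ > 0 and ω ∈ ℝ. Suppose R₀ > 0, C₀ > 0, and v : {x ∈ ℝ³ : |x| ≥ R₀} → ℂ is differentiable and satisfies the radiation-type estimates |v(x)| ≤ C₀/|x| and |∂v(x)/∂x_k − i ξ_k(x/|x|) v(x)| ≤ C₀/|x|² for all |x| ≥ R₀ and k = 1,2,3. Then there exists C₁ > 0 such that for all |x| ≥ R₀, writing η = x/|x|, | conj(v(x)) · Σ_{k,j=1}^3 a_{kj} η_k ∂v(x)/∂x_j − i ω κ₁^{1/2} (𝐚⁻¹η·η)^{−1/2} |v(x)|² | ≤ C₁/|x|³. -/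
/-!
Write `∂_j v = e_j + i ξ_j(η) v`, where the remainders `e_j` are `O(|x|⁻²)` by hypothesis.
Since `ξ(η) = c 𝐚⁻¹η` with `c = ω κ₁^{1/2} (𝐚⁻¹η·η)^{−1/2}`, the leading part contributes
`conj v · i c v Σ_k η_k (𝐚 𝐚⁻¹η)_k = i c |v|² |η|² = i c |v|²`, which is exactly the subtracted term.
What is left is `conj v · Σ a_{kj} η_k e_j`, of size `|v| · Σ |a_{kj}| · C₀ |x|⁻² ≤ C₀² Σ |a_{kj}| / |x|³`.
-/

open MeasureTheory Filter
open scoped Topology BigOperators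

noncomputable section

open Matrix ComplexConjugate

section

variable {ι : Type*} [Fintype ι]

theorem sum_sum_mul_nonsing_inv_mulVec [DecidableEq ι] {a : Matrix ι ι ℝ} (ha : IsUnit a.det)
    (η : ι → ℝ) : ∑ k, ∑ j, a k j * η k * (a⁻¹ *ᵥ η) j = η ⬝ᵥ η :=
  calc ∑ k, ∑ j, a k j * η k * (a⁻¹ *ᵥ η) j = (a *ᵥ (a⁻¹ *ᵥ η)) ⬝ᵥ η := by
        simp only [dotProduct, mulVec, Finset.sum_mul]
        exact Finset.sum_congr rfl fun k _ => Finset.sum_congr rfl fun j _ => by ring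
    _ = η ⬝ᵥ η := by rw [mulVec_mulVec, mul_nonsing_inv _ ha, one_mulVec]

theorem norm_sum_sum_mul_le {a : Matrix ι ι ℝ} {η : ι → ℝ} (hη : ∀ k, |η k| ≤ 1)
    {e : ι → ℂ} {ε : ℝ} (he : ∀ j, ‖e j‖ ≤ ε) :
    ‖∑ k, ∑ j, (a k j : ℂ) * η k * e j‖ ≤ (∑ k, ∑ j, |a k j|) * ε := by
  have hterm (k j : ι) : ‖(a k j : ℂ) * η k * e j‖ ≤ |a k j| * ε := by
    rw [norm_mul, norm_mul, Complex.norm_real, Complex.norm_real, Real.norm_eq_abs,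
      Real.norm_eq_abs]
    calc |a k j| * |η k| * ‖e j‖ ≤ |a k j| * ‖e j‖ := by
          gcongr; exact mul_le_of_le_one_right (abs_nonneg _) (hη k)
      _ ≤ |a k j| * ε := by gcongr; exact he j
  calc ‖∑ k, ∑ j, (a k j : ℂ) * η k * e j‖
      ≤ ∑ k, ∑ j, ‖(a k j : ℂ) * η k * e j‖ :=
        (norm_sum_le _ _).trans (Finset.sum_le_sum fun k _ => norm_sum_le _ _)
    _ ≤ ∑ k, ∑ j, |a k j| * ε := by gcongr with k _ j _; exact hterm k j
    _ = (∑ k, ∑ j, |a k j|) * ε := by simp only [Finset.sum_mul]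

/-- The leading terms `i c (a⁻¹η)_j u` cancel against `i c |u|²` because `a (a⁻¹η) = η` and
`η · η = 1`. -/
theorem conj_mul_sum_sum_sub_eq [DecidableEq ι] {a : Matrix ι ι ℝ} (ha : IsUnit a.det)
    {η : ι → ℝ} (hη : η ⬝ᵥ η = 1) (c : ℝ) (D : ι → ℂ) (u : ℂ) :
    conj u * (∑ k, ∑ j, (a k j : ℂ) * η k * D j) - Complex.I * c * ((‖u‖ ^ 2 : ℝ) : ℂ) =
      conj u * ∑ k, ∑ j, (a k j : ℂ) * η k *
        (D j - Complex.I * ((c * (a⁻¹ *ᵥ η) j : ℝ) : ℂ) * u) := by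
  have hlead : ∑ k, ∑ j, (a k j : ℂ) * η k * (Complex.I * ((c * (a⁻¹ *ᵥ η) j : ℝ) : ℂ) * u)
      = Complex.I * c * u := by
    have h := congrArg (fun r : ℝ => Complex.I * c * u * (r : ℂ))
      (sum_sum_mul_nonsing_inv_mulVec ha η)
    simp only [hη, Complex.ofReal_one, mul_one] at h
    rw [← h]
    push_cast
    simp only [Finset.mul_sum]
    exact Finset.sum_congr rfl fun k _ => Finset.sum_congr rfl fun j _ => by ring
  have hsq : ((‖u‖ ^ 2 : ℝ) : ℂ) = conj u * u := by
    rw [Complex.conj_mul']; push_cast; rfl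
  simp only [mul_sub, Finset.sum_sub_distrib, hlead, hsq]
  ring

theorem inv_norm_mul_dotProduct_self {x : EuclideanSpace ℝ ι} (hx : x ≠ 0) :
    (fun i => ‖x‖⁻¹ * x i) ⬝ᵥ (fun i => ‖x‖⁻¹ * x i) = 1 := by
  have hx' : ‖x‖ ≠ 0 := norm_ne_zero_iff.mpr hx
  calc _ = ‖x‖⁻¹ ^ 2 * ‖x‖ ^ 2 := by
        rw [EuclideanSpace.real_norm_sq_eq, dotProduct, Finset.mul_sum]
        exact Finset.sum_congr rfl fun i _ => by ring
    _ = 1 := by field_simp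

theorem abs_inv_norm_mul_apply_le_one (x : EuclideanSpace ℝ ι) (k : ι) :
    |‖x‖⁻¹ * x k| ≤ 1 := by
  rw [abs_mul, abs_inv, abs_norm]
  exact inv_mul_le_one_of_le₀ (by simpa using PiLp.norm_apply_le x k) (norm_nonneg x)

end

theorem stmt7_general (a : Matrix (Fin 3) (Fin 3) ℝ) (ha : a.PosDef)
    (κ₁ ω : ℝ)
    (R₀ C₀ : ℝ) (hR₀ : 0 < R₀) (hC₀ : 0 < C₀) (v : E3 → ℂ)
    (hv1 : ∀ x : E3, R₀ ≤ ‖x‖ → ‖v x‖ ≤ C₀ / ‖x‖)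
    (hv2 : ∀ x : E3, R₀ ≤ ‖x‖ → ∀ k : Fin 3,
      ‖fderiv ℝ v x (EuclideanSpace.single k 1)
          - Complex.I * ((xiVec a κ₁ ω (fun i => ‖x‖⁻¹ * x i) k : ℝ) : ℂ) * v x‖
        ≤ C₀ / ‖x‖ ^ 2) :
    ∃ C₁ > (0 : ℝ), ∀ x : E3, R₀ ≤ ‖x‖ →
      ‖(starRingEnd ℂ) (v x) *
            (∑ k : Fin 3, ∑ j : Fin 3, (a k j : ℂ) * ((‖x‖⁻¹ * x k : ℝ) : ℂ) *
              fderiv ℝ v x (EuclideanSpace.single j 1))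
          - Complex.I *
            ((ω * Real.sqrt κ₁ *
                (Real.sqrt (∑ i, a⁻¹.mulVec (fun i => ‖x‖⁻¹ * x i) i * (‖x‖⁻¹ * x i)))⁻¹
              : ℝ) : ℂ) * ((‖v x‖ ^ 2 : ℝ) : ℂ)‖
        ≤ C₁ / ‖x‖ ^ 3 := by
  set M : ℝ := ∑ k, ∑ j, |a k j|
  refine ⟨M * C₀ ^ 2 + 1, by positivity, fun x hx => ?_⟩
  have hx0 : 0 < ‖x‖ := hR₀.trans_le hx
  have hdet : IsUnit a.det := (isUnit_iff_isUnit_det a).mp ha.isUnit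
  have hsplit := conj_mul_sum_sum_sub_eq hdet
    (inv_norm_mul_dotProduct_self (norm_pos_iff.mp hx0))
    (ω * Real.sqrt κ₁ *
      (Real.sqrt (∑ i, a⁻¹.mulVec (fun i => ‖x‖⁻¹ * x i) i * (‖x‖⁻¹ * x i)))⁻¹)
    (fun j => fderiv ℝ v x (EuclideanSpace.single j 1)) (v x)
  -- `xiVec a κ₁ ω η j` unfolds to `c * (a⁻¹ *ᵥ η) j`, so `hv2` bounds the remainders of `hsplit`.
  have hrem := norm_sum_sum_mul_le (a := a) (abs_inv_norm_mul_apply_le_one x)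
    (e := fun j => fderiv ℝ v x (EuclideanSpace.single j 1)
      - Complex.I * ((xiVec a κ₁ ω (fun i => ‖x‖⁻¹ * x i) j : ℝ) : ℂ) * v x) (hv2 x hx)
  beta_reduce at hsplit
  rw [hsplit, norm_mul, Complex.norm_conj]
  calc ‖v x‖ * ‖_‖ ≤ C₀ / ‖x‖ * (M * (C₀ / ‖x‖ ^ 2)) := by
        gcongr
        · exact hv1 x hx
        · exact hrem
    _ = M * C₀ ^ 2 / ‖x‖ ^ 3 := by field_simp
    _ ≤ (M * C₀ ^ 2 + 1) / ‖x‖ ^ 3 := by gcongr; linarith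

/-- if `v` satisfies the radiation-type estimates
`|v(x)| ≤ C₀/|x|` and `|∂_k v(x) − i ξ_k(x/|x|) v(x)| ≤ C₀/|x|²` for `|x| ≥ R₀`,
then there is `C₁ > 0` such that for all `|x| ≥ R₀`, with `η = x/|x|`,
`| conj(v(x)) Σ a_{kj} η_k ∂_j v(x) − i ω κ₁^{1/2} (𝐚⁻¹η·η)^{−1/2} |v(x)|² | ≤ C₁/|x|³`. -/
theorem stmt7 (a : Matrix (Fin 3) (Fin 3) ℝ) (ha : a.PosDef) (hsym : a.IsSymm)
    (κ₁ ω : ℝ) (hκ : 0 < κ₁)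
    (R₀ C₀ : ℝ) (hR₀ : 0 < R₀) (hC₀ : 0 < C₀) (v : E3 → ℂ)
    (hdiff : ∀ x : E3, R₀ ≤ ‖x‖ → DifferentiableAt ℝ v x)
    (hv1 : ∀ x : E3, R₀ ≤ ‖x‖ → ‖v x‖ ≤ C₀ / ‖x‖)
    (hv2 : ∀ x : E3, R₀ ≤ ‖x‖ → ∀ k : Fin 3,
      ‖fderiv ℝ v x (EuclideanSpace.single k 1)
          - Complex.I * ((xiVec a κ₁ ω (fun i => ‖x‖⁻¹ * x i) k : ℝ) : ℂ) * v x‖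
        ≤ C₀ / ‖x‖ ^ 2) :
    ∃ C₁ > (0 : ℝ), ∀ x : E3, R₀ ≤ ‖x‖ →
      ‖(starRingEnd ℂ) (v x) *
            (∑ k : Fin 3, ∑ j : Fin 3, (a k j : ℂ) * ((‖x‖⁻¹ * x k : ℝ) : ℂ) *
              fderiv ℝ v x (EuclideanSpace.single j 1))
          - Complex.I *
            ((ω * Real.sqrt κ₁ *
                (Real.sqrt (∑ i, a⁻¹.mulVec (fun i => ‖x‖⁻¹ * x i) i * (‖x‖⁻¹ * x i)))⁻¹
              : ℝ) : ℂ) * ((‖v x‖ ^ 2 : ℝ) : ℂ)‖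
        ≤ C₁ / ‖x‖ ^ 3 :=
  stmt7_general a ha κ₁ ω R₀ C₀ hR₀ hC₀ v hv1 hv2
end
end

section
/- Let r > 0, s ∈ ℝ, c ∈ ℂ with Im c > 0, and p, q ∈ ℂ. Then lim_{t→0⁺} (i/(2π)) ∫_{−∞}^{∞} (p + qη) / ( (η + i r)(η − c)(s + i t − η) ) dη = − (p − i q r) / ( (c + i r)(s + i r) ), where for each t > 0 the integral converges absolutely. (This evaluates the Cauchy-type 'plus' projection Π⁺ applied to the rational functions 1/(Δ⁺(ξ)A₂⁻(ξ)) and (iϑ(ξ') + i ã₃₃ ξ₃)/(Δ⁺(ξ)A₂⁻(ξ)) arising in the Šapiro–Lopatinskiĭ condition computation.) -/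
/-!
After partial fractions in `η`, everything reduces to
`∫ dx / ((x - a)(x - b)) = 2πi / (a - b)` for `Im a > 0 > Im b`. The primitive
`(log (x - a) - log (x - b)) / (a - b)` tends to `0` at `+∞`, while at `-∞` the points `x - a`
and `x - b` approach the branch cut of `log` from opposite sides, which produces the jump
`-2πi`. For `0 < t < Im c` the integral is therefore `-2πi` times the residue at the only pole
`-ir` in the lower half-plane, a rational function of `s + it` that is continuous at `t = 0`.
-/

open MeasureTheory Filter Complex ComplexConjugate
open scoped Topology Real

lemma ofReal_sub_ne_zero_of_im_ne_zero (x : ℝ) {a : ℂ} (ha : a.im ≠ 0) : (x : ℂ) - a ≠ 0 :=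
  fun h => ha (by simpa using congrArg im h)

lemma norm_inv_ofReal_sub_le (x : ℝ) {a : ℂ} (ha : a.im ≠ 0) : ‖((x : ℂ) - a)⁻¹‖ ≤ |a.im|⁻¹ := by
  rw [norm_inv]
  refine inv_anti₀ (abs_pos.2 ha) ?_
  simpa using abs_im_le_norm ((x : ℂ) - a)

lemma sq_norm_ofReal_sub (x : ℝ) (a : ℂ) : ‖(x : ℂ) - a‖ ^ 2 = (x - a.re) ^ 2 + a.im ^ 2 := by
  rw [Complex.sq_norm, normSq_apply]
  simp
  ring

lemma continuous_inv_ofReal_sub {a : ℂ} (ha : a.im ≠ 0) :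
    Continuous fun x : ℝ => ((x : ℂ) - a)⁻¹ :=
  (by fun_prop : Continuous fun x : ℝ => (x : ℂ) - a).inv₀ (ofReal_sub_ne_zero_of_im_ne_zero · ha)

lemma integrable_inv_sub_sq_add_sq (α β : ℝ) (hβ : β ≠ 0) :
    Integrable (fun x : ℝ => ((x - α) ^ 2 + β ^ 2)⁻¹) := by
  refine (((integrable_inv_one_add_sq.comp_div hβ).comp_sub_right α).const_mul (β ^ 2)⁻¹).congr
    (.of_forall fun x => ?_)
  dsimp only
  field_simp
  ring

lemma memLp_two_inv_ofReal_sub {a : ℂ} (ha : a.im ≠ 0) :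
    MemLp (fun x : ℝ => ((x : ℂ) - a)⁻¹) 2 := by
  refine (memLp_two_iff_integrable_sq_norm (continuous_inv_ofReal_sub ha).aestronglyMeasurable).2 ?_
  simpa only [norm_inv, inv_pow, sq_norm_ofReal_sub] using integrable_inv_sub_sq_add_sq a.re a.im ha

lemma integrable_inv_ofReal_sub_mul_inv_ofReal_sub {a b : ℂ} (ha : a.im ≠ 0) (hb : b.im ≠ 0) :
    Integrable (fun x : ℝ => ((x : ℂ) - a)⁻¹ * ((x : ℂ) - b)⁻¹) :=
  (memLp_two_inv_ofReal_sub ha).integrable_mul (memLp_two_inv_ofReal_sub hb)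

lemma hasDerivAt_log_ofReal_sub (x : ℝ) {a : ℂ} (ha : a.im ≠ 0) :
    HasDerivAt (fun y : ℝ => log ((y : ℂ) - a)) ((x : ℂ) - a)⁻¹ x := by
  have hslit : (x : ℂ) - a ∈ slitPlane := mem_slitPlane_iff.2 (Or.inr (by simpa using ha))
  simpa using ((hasDerivAt_log hslit).comp (x : ℂ) ((hasDerivAt_id _).sub_const a)).comp_ofReal

lemma tendsto_ofReal_div_atTop (a : ℂ) : Tendsto (fun x : ℝ => a / x) atTop (𝓝 0) := by
  simpa [div_eq_mul_inv] using tendsto_inv_atTop_zero.ofReal.const_mul a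

lemma tendsto_ofReal_div_atBot (a : ℂ) : Tendsto (fun x : ℝ => a / x) atBot (𝓝 0) := by
  simpa [div_eq_mul_inv] using tendsto_inv_atBot_zero.ofReal.const_mul a

lemma tendsto_log_ofReal_sub_sub_log_atTop (a : ℂ) :
    Tendsto (fun x : ℝ => log ((x : ℂ) - a) - Real.log x) atTop (𝓝 0) := by
  have h : Tendsto (fun x : ℝ => log (1 - a / x)) atTop (𝓝 0) := by
    simpa [Function.comp_def] using (continuousAt_clog (by simp)).tendsto.comp
      ((tendsto_ofReal_div_atTop a).const_sub 1)
  refine h.congr' ?_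
  filter_upwards [eventually_gt_atTop (max 0 a.re)] with x hx
  have hx0 : 0 < x := (le_max_left _ _).trans_lt hx
  have hxa : (x : ℂ) - a ≠ 0 := fun h => by
    have := congrArg re h
    simp only [sub_re, ofReal_re, zero_re] at this
    linarith [le_max_right 0 a.re]
  have hfac : (x : ℂ) - a = x * (1 - a / x) := by
    field_simp [show (x : ℂ) ≠ 0 by exact_mod_cast hx0.ne']
  rw [hfac, log_ofReal_mul hx0 (right_ne_zero_of_mul (hfac ▸ hxa))]
  ring

lemma tendsto_log_ofReal_sub_sub_log_neg_atBot_of_im_pos {a : ℂ} (ha : 0 < a.im) :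
    Tendsto (fun x : ℝ => log ((x : ℂ) - a) - Real.log (-x)) atBot (𝓝 (-(π * I))) := by
  have hlim : Tendsto (fun x : ℝ => -1 + a / x) atBot (𝓝[{z : ℂ | z.im < 0}] (-1)) := by
    refine tendsto_nhdsWithin_iff.2 ⟨by simpa using (tendsto_ofReal_div_atBot a).const_add (-1), ?_⟩
    filter_upwards [eventually_lt_atBot 0] with x hx
    simpa [div_ofReal_im] using div_neg_of_pos_of_neg ha hx
  have h := (tendsto_log_nhdsWithin_im_neg_of_re_neg_of_im_zero (z := -1) (by simp) (by simp)).comp hlim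
  simp only [norm_neg, norm_one, Real.log_one, ofReal_zero, zero_sub] at h
  refine h.congr' ?_
  filter_upwards [eventually_lt_atBot 0] with x hx
  have hfac : (x : ℂ) - a = ((-x : ℝ) : ℂ) * (-1 + a / x) := by
    push_cast
    field_simp [show (x : ℂ) ≠ 0 by exact_mod_cast hx.ne]
    ring
  have hne : -1 + a / x ≠ 0 := fun h => by simpa [h, ha.ne'] using congrArg im hfac
  rw [hfac, log_ofReal_mul (neg_pos.2 hx) hne]
  simp

lemma tendsto_log_ofReal_sub_sub_log_neg_atBot_of_im_neg {a : ℂ} (ha : a.im < 0) :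
    Tendsto (fun x : ℝ => log ((x : ℂ) - a) - Real.log (-x)) atBot (𝓝 (π * I)) := by
  have h := ((continuous_conj.tendsto _).comp
    (tendsto_log_ofReal_sub_sub_log_neg_atBot_of_im_pos (a := conj a) (by simpa using ha)))
  simp only [Function.comp_def, map_sub, map_neg, map_mul, conj_ofReal, conj_I] at h
  refine (h.congr fun x => ?_).trans (by simp)
  rw [← log_conj _ (fun h => by simpa [ha.ne] using (arg_eq_pi_iff.1 h).2)]
  simp

theorem integral_inv_ofReal_sub_mul_inv_ofReal_sub {a b : ℂ} (ha : 0 < a.im) (hb : b.im < 0) :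
    ∫ x : ℝ, ((x : ℂ) - a)⁻¹ * ((x : ℂ) - b)⁻¹ = 2 * π * I / (a - b) := by
  have hab : a - b ≠ 0 := fun h => by
    have := congrArg im h
    simp only [sub_im, zero_im] at this
    linarith
  have hderiv (x : ℝ) : HasDerivAt (fun y : ℝ => (log ((y : ℂ) - a) - log ((y : ℂ) - b)) / (a - b))
      (((x : ℂ) - a)⁻¹ * ((x : ℂ) - b)⁻¹) x := by
    refine (((hasDerivAt_log_ofReal_sub x ha.ne').sub
      (hasDerivAt_log_ofReal_sub x hb.ne)).div_const (a - b)).congr_deriv ?_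
    have := ofReal_sub_ne_zero_of_im_ne_zero x ha.ne'
    have := ofReal_sub_ne_zero_of_im_ne_zero x hb.ne
    field_simp
    ring
  have htop := ((tendsto_log_ofReal_sub_sub_log_atTop a).sub
    (tendsto_log_ofReal_sub_sub_log_atTop b)).div_const (a - b)
  have hbot := ((tendsto_log_ofReal_sub_sub_log_neg_atBot_of_im_pos ha).sub
    (tendsto_log_ofReal_sub_sub_log_neg_atBot_of_im_neg hb)).div_const (a - b)
  simp only [sub_sub_sub_cancel_right] at htop hbot
  rw [integral_of_hasDerivAt_of_tendsto hderiv
    (integrable_inv_ofReal_sub_mul_inv_ofReal_sub ha.ne' hb.ne) hbot htop]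
  ring

section LinearOverCubic

variable (p q : ℂ) {b c w : ℂ}

lemma integrable_linear_div_cubic (hb : b.im ≠ 0) (hc : c.im ≠ 0) (hw : w.im ≠ 0) :
    Integrable (fun x : ℝ => (p + q * x) / (((x : ℂ) - b) * ((x : ℂ) - c) * ((x : ℂ) - w))) := by
  have hbound (x : ℝ) : ‖q + (p + q * b) * ((x : ℂ) - b)⁻¹‖ ≤ ‖q‖ + ‖p + q * b‖ * |b.im|⁻¹ :=
    calc _ ≤ ‖q‖ + ‖p + q * b‖ * ‖((x : ℂ) - b)⁻¹‖ := (norm_add_le _ _).trans_eq (by rw [norm_mul])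
      _ ≤ _ := by gcongr; exact norm_inv_ofReal_sub_le x hb
  refine ((integrable_inv_ofReal_sub_mul_inv_ofReal_sub hc hw).bdd_mul
    (continuous_const.add (continuous_const.mul (continuous_inv_ofReal_sub hb))).aestronglyMeasurable
    (.of_forall hbound)).congr (.of_forall fun x => ?_)
  have := ofReal_sub_ne_zero_of_im_ne_zero x hb
  have := ofReal_sub_ne_zero_of_im_ne_zero x hc
  have := ofReal_sub_ne_zero_of_im_ne_zero x hw
  simp only [Pi.add_apply, Pi.mul_apply]
  field_simp
  ring

theorem integral_linear_div_cubic (hb : b.im < 0) (hc : 0 < c.im) (hw : 0 < w.im) (hcw : c ≠ w) :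
    ∫ x : ℝ, (p + q * x) / (((x : ℂ) - b) * ((x : ℂ) - c) * ((x : ℂ) - w)) =
      -(2 * π * I) * (p + q * b) / ((c - b) * (w - b)) := by
  have hcw' : c - w ≠ 0 := sub_ne_zero.2 hcw
  have hcb : c - b ≠ 0 := sub_ne_zero.2 (ne_of_apply_ne im (hb.trans hc).ne')
  have hwb : w - b ≠ 0 := sub_ne_zero.2 (ne_of_apply_ne im (hb.trans hw).ne')
  have hpartial : (fun x : ℝ => (p + q * x) / (((x : ℂ) - b) * ((x : ℂ) - c) * ((x : ℂ) - w))) =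
      fun x : ℝ => (p + q * c) / (c - w) * (((x : ℂ) - c)⁻¹ * ((x : ℂ) - b)⁻¹) +
        (p + q * w) / (w - c) * (((x : ℂ) - w)⁻¹ * ((x : ℂ) - b)⁻¹) := by
    ext x
    have := ofReal_sub_ne_zero_of_im_ne_zero x hb.ne
    have := ofReal_sub_ne_zero_of_im_ne_zero x hc.ne'
    have := ofReal_sub_ne_zero_of_im_ne_zero x hw.ne'
    field_simp
    ring
  rw [hpartial, integral_add
      ((integrable_inv_ofReal_sub_mul_inv_ofReal_sub hc.ne' hb.ne).const_mul _)
      ((integrable_inv_ofReal_sub_mul_inv_ofReal_sub hw.ne' hb.ne).const_mul _),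
    integral_const_mul, integral_const_mul, integral_inv_ofReal_sub_mul_inv_ofReal_sub hc hb,
    integral_inv_ofReal_sub_mul_inv_ofReal_sub hw hb]
  field_simp
  ring

end LinearOverCubic

/-- the Cauchy-type 'plus' projection evaluation:
for `r > 0`, `s ∈ ℝ`, `c ∈ ℂ` with `Im c > 0` and `p, q ∈ ℂ`,
`lim_{t→0⁺} (i/2π) ∫_ℝ (p + qη)/((η + ir)(η − c)(s + it − η)) dη
  = −(p − iqr)/((c + ir)(s + ir))`,
the integral converging absolutely for each `t > 0`. -/
theorem stmt15 (r s : ℝ) (hr : 0 < r) (c : ℂ) (hc : 0 < c.im) (p q : ℂ) :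
    (∀ t : ℝ, 0 < t →
      Integrable (fun η : ℝ =>
        (p + q * (η : ℂ)) /
          (((η : ℂ) + Complex.I * (r : ℂ)) * ((η : ℂ) - c)
            * ((s : ℂ) + Complex.I * (t : ℂ) - (η : ℂ)))) volume) ∧
    Tendsto (fun t : ℝ =>
        Complex.I / (2 * (Real.pi : ℂ)) *
          ∫ η : ℝ, (p + q * (η : ℂ)) /
            (((η : ℂ) + Complex.I * (r : ℂ)) * ((η : ℂ) - c)
              * ((s : ℂ) + Complex.I * (t : ℂ) - (η : ℂ))))
      (𝓝[>] (0 : ℝ))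
      (𝓝 (-(p - Complex.I * q * (r : ℂ)) /
        ((c + Complex.I * (r : ℂ)) * ((s : ℂ) + Complex.I * (r : ℂ))))) := by
  have hb : (-(I * r)).im < 0 := by simpa using hr
  have hform (t η : ℝ) : (p + q * (η : ℂ)) /
      (((η : ℂ) + I * r) * ((η : ℂ) - c) * ((s : ℂ) + I * t - (η : ℂ))) =
      -((p + q * η) / (((η : ℂ) - -(I * r)) * ((η : ℂ) - c) * ((η : ℂ) - (s + I * t)))) := by
    rw [← div_neg]
    ring
  refine ⟨fun t ht => ?_, ?_⟩
  · simp only [hform]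
    exact (integrable_linear_div_cubic p q hb.ne hc.ne' (by simpa using ht.ne')).neg
  · have hcr : c + I * r ≠ 0 := ne_of_apply_ne im (by simp; linarith)
    have hlim : Tendsto (fun t : ℝ => -(p - I * q * r) / ((c + I * r) * (s + I * t + I * r)))
        (𝓝 0) (𝓝 (-(p - I * q * r) / ((c + I * r) * (s + I * r)))) := by
      have hsr : (s : ℂ) + I * r ≠ 0 := ne_of_apply_ne im (by simpa using hr.ne')
      have hcont : ContinuousAt
          (fun t : ℝ => -(p - I * q * r) / ((c + I * r) * (s + I * t + I * r))) 0 := by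
        fun_prop (disch := simpa using mul_ne_zero hcr hsr)
      simpa using hcont.tendsto
    refine (hlim.mono_left nhdsWithin_le_nhds).congr' ?_
    filter_upwards [Ioo_mem_nhdsGT hc] with t ⟨ht0, htc⟩
    have hcw : c ≠ s + I * t := ne_of_apply_ne im (by simpa using htc.ne')
    have hwr : s + I * t + I * r ≠ 0 := ne_of_apply_ne im (by simp; linarith)
    simp only [hform, integral_neg]
    rw [integral_linear_div_cubic p q hb hc (by simpa using ht0) hcw, sub_neg_eq_add,
      sub_neg_eq_add]
    field_simp
    rw [I_sq]
    ring
end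

section
/- Let β̃ > 0, a₃₃ > 0, r > 0, α₂ > 0, s > 0 and α₁ ∈ ℝ. Define the complex number S := − i β̃ / ( a₃₃ (α₁ + i(α₂ + r)) ) − 2 s · i β̃ α₂ / (α₁ + i(α₂ + r)). Then Re S = − β̃ (α₂ + r) (1 + 2 α₂ a₃₃ s) / ( a₃₃ ( α₁² + (α₂ + r)² ) ) < 0. -/
open Complex

theorem Complex.re_I_mul_ofReal_div (k x y : ℝ) :
    (I * k / (x + y * I)).re = k * y / (x ^ 2 + y ^ 2) := by
  simp only [div_re, mul_re, I_re, ofReal_re, zero_mul, I_im, ofReal_im, mul_zero, sub_self,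
    add_re, mul_one, add_zero, normSq_apply, add_im, mul_im, zero_add, zero_div, one_mul]
  ring

theorem neg_I_mul_div_sub_two_mul_I_mul_div (βt a33 s α₂ : ℝ) (z : ℂ) :
    -I * βt / (a33 * z) - 2 * s * (I * βt * α₂ / z)
      = -(I * ((βt / a33 + 2 * s * βt * α₂ : ℝ) : ℂ) / z) := by
  push_cast
  rw [mul_comm (a33 : ℂ), ← div_div]
  ring

/-- verification of the Šapiro–Lopatinskiĭ type condition: for
`β̃ > 0`, `a₃₃ > 0`, `r > 0`, `α₂ > 0`, `s > 0`, `α₁ ∈ ℝ`, the boundary symbol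
`S = −iβ̃/(a₃₃(α₁ + i(α₂+r))) − 2s·iβ̃α₂/(α₁ + i(α₂+r))` satisfies
`Re S = −β̃(α₂+r)(1 + 2α₂a₃₃s)/(a₃₃(α₁² + (α₂+r)²)) < 0`. -/
theorem stmt17 (βt a33 r α₂ s α₁ : ℝ)
    (hβ : 0 < βt) (ha : 0 < a33) (hr : 0 < r) (hα₂ : 0 < α₂) (hs : 0 < s)
    (S : ℂ)
    (hS : S = -Complex.I * (βt : ℂ) / ((a33 : ℂ) * ((α₁ : ℂ) + ((α₂ + r : ℝ) : ℂ) * Complex.I))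
        - 2 * (s : ℂ) * (Complex.I * (βt : ℂ) * (α₂ : ℂ)
            / ((α₁ : ℂ) + ((α₂ + r : ℝ) : ℂ) * Complex.I))) :
    S.re = -(βt * (α₂ + r) * (1 + 2 * α₂ * a33 * s)) / (a33 * (α₁ ^ 2 + (α₂ + r) ^ 2))
      ∧ S.re < 0 := by
  have hre : S.re = -((βt / a33 + 2 * s * βt * α₂) * (α₂ + r) / (α₁ ^ 2 + (α₂ + r) ^ 2)) := by
    rw [hS, neg_I_mul_div_sub_two_mul_I_mul_div, neg_re, re_I_mul_ofReal_div]
  rw [hre]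
  constructor
  · field_simp
  · exact neg_neg_of_pos (by positivity)
end

section
/- Let χ̆ : [0,∞) → ℝ be absolutely continuous with χ̆' ∈ L¹(0,∞) (i.e. χ̆ ∈ W¹₁(0,∞)), and suppose χ̆(0) = 1, χ̆(ρ) ≥ 0 for all ρ ≥ 0, χ̆ is non-increasing on [0,∞), and ∫₀^∞ ρ χ̆(ρ) dρ < ∞. Then χ is in the class X¹₊, that is, σ_χ(ω) > 0 for every ω ∈ ℝ: explicitly, (a) ∫₀^∞ ρ χ̆(ρ) dρ > 0, and (b) for every ω ≠ 0 the integral ∫₀^∞ χ̆(ρ) sin(ρω) dρ converges absolutely and (1/ω) ∫₀^∞ χ̆(ρ) sin(ρω) dρ > 0. -/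
/-!
Write `χ x = 1 + ∫₀ˣ g`. The primitive is continuous, so `χ > 0` near `0`, which gives (a).
By the Lebesgue differentiation theorem `g = χ'` a.e., so `g ≤ 0` a.e. as `χ` is antitone; and
since `ρ χ(ρ)` is integrable, `χ` tends to `0` at infinity, whence `χ ρ = ∫_ρ^∞ (-g)`.
Fubini then gives `∫₀^∞ χ(ρ) sin(ρω) dρ = ω⁻¹ ∫₀^∞ (-g t) (1 - cos(tω)) dt`, where the integrand
is nonnegative, and it is not a.e. zero because `∫₀^∞ (-g) = χ 0 = 1` while `cos(tω) = 1` only on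
a countable set.
-/

open MeasureTheory Set Filter Topology Real

theorem eq_zero_of_tendsto_of_integrableOn_Ioi {E : Type*} [NormedAddCommGroup E]
    {f : ℝ → E} {L : E} {a : ℝ} (hf : Tendsto f atTop (𝓝 L)) (hi : IntegrableOn f (Ioi a)) :
    L = 0 := by
  by_contra hL
  have hL' : 0 < ‖L‖ / 2 := by positivity
  obtain ⟨M, hM⟩ := eventually_atTop.mp
    ((hf.norm.eventually (eventually_gt_nhds (half_lt_self (norm_pos_iff.mpr hL)))).and
      (eventually_ge_atTop a))
  have hconst : IntegrableOn (fun _ ↦ ‖L‖ / 2) (Ioi M) := by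
    refine Integrable.mono' (IntegrableOn.mono_set hi.norm fun x hx ↦ ?_)
      aestronglyMeasurable_const ?_
    · exact (hM M le_rfl).2.trans_lt hx
    · filter_upwards [ae_restrict_mem measurableSet_Ioi] with x hx
      rw [Real.norm_of_nonneg hL'.le]
      exact (hM x (le_of_lt hx)).1.le
  simp [hL'.ne'] at hconst

theorem integrableOn_Ioi_one_of_integrableOn_id_mul {f : ℝ → ℝ}
    (hf : IntegrableOn (fun ρ ↦ ρ * f ρ) (Ioi 0)) : IntegrableOn f (Ioi 1) := by
  have hbdd : IntegrableOn (fun ρ ↦ ρ * f ρ * ρ⁻¹) (Ioi 1) := by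
    refine (hf.mono_set (Ioi_subset_Ioi zero_le_one)).mul_bdd (c := 1)
      measurable_inv.aestronglyMeasurable ?_
    filter_upwards [ae_restrict_mem measurableSet_Ioi] with ρ hρ
    rw [norm_inv, Real.norm_of_nonneg (zero_le_one.trans hρ.le)]
    exact inv_le_one_of_one_le₀ hρ.le
  refine hbdd.congr_fun (fun ρ hρ ↦ ?_) measurableSet_Ioi
  have hρ0 : ρ ≠ 0 := (zero_lt_one.trans (mem_Ioi.mp hρ)).ne'
  field_simp

theorem integrableOn_mul_sin_of_integrableOn_id_mul {f : ℝ → ℝ}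
    (hf : IntegrableOn (fun ρ ↦ ρ * f ρ) (Ioi 0)) (ω : ℝ) :
    IntegrableOn (fun ρ ↦ f ρ * sin (ρ * ω)) (Ioi 0) := by
  have hbdd : IntegrableOn (fun ρ ↦ ρ * f ρ * (sin (ρ * ω) / ρ)) (Ioi 0) := by
    refine hf.mul_bdd (c := |ω|) (by fun_prop : Measurable _).aestronglyMeasurable ?_
    filter_upwards [ae_restrict_mem measurableSet_Ioi] with ρ hρ
    have hρ : 0 < ρ := hρ
    rw [norm_div, Real.norm_eq_abs, Real.norm_of_nonneg hρ.le, div_le_iff₀ hρ]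
    calc |sin (ρ * ω)| ≤ |ρ * ω| := abs_sin_le_abs
      _ = |ω| * ρ := by rw [abs_mul, abs_of_pos hρ, mul_comm]
  refine hbdd.congr_fun (fun ρ hρ ↦ ?_) measurableSet_Ioi
  field_simp [(ne_of_gt hρ : ρ ≠ 0)]

theorem setIntegral_Ioi_id_mul_pos {f : ℝ → ℝ} (hf0 : 0 < f 0)
    (hcont : ContinuousWithinAt f (Ioi 0) 0) (hnn : ∀ ρ, 0 ≤ ρ → 0 ≤ f ρ)
    (hint : IntegrableOn (fun ρ ↦ ρ * f ρ) (Ioi 0)) :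
    0 < ∫ ρ in Ioi 0, ρ * f ρ := by
  obtain ⟨δ, hδ, hpos⟩ := mem_nhdsGT_iff_exists_Ioo_subset.mp
    (hcont.eventually (eventually_gt_nhds hf0))
  have hnn' : 0 ≤ᵐ[volume.restrict (Ioi 0)] fun ρ ↦ ρ * f ρ := by
    filter_upwards [ae_restrict_mem measurableSet_Ioi] with ρ hρ
    exact mul_nonneg (le_of_lt hρ) (hnn ρ (le_of_lt hρ))
  rw [setIntegral_pos_iff_support_of_nonneg_ae hnn' hint]
  calc (0 : ENNReal) < volume (Ioo 0 δ) := by simpa using hδ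
    _ ≤ volume (Function.support (fun ρ ↦ ρ * f ρ) ∩ Ioi 0) :=
      measure_mono fun ρ hρ ↦ ⟨(mul_pos hρ.1 (hpos hρ)).ne', hρ.1⟩

theorem ae_cos_mul_ne_one {ω : ℝ} (hω : ω ≠ 0) : ∀ᵐ t : ℝ, cos (t * ω) ≠ 1 := by
  refine measure_mono_null (fun t ht ↦ ?_)
    ((countable_range fun n : ℤ ↦ n * (2 * π) / ω).measure_zero volume)
  obtain ⟨n, hn⟩ := (cos_eq_one_iff _).mp (not_not.mp ht)
  exact ⟨n, by simp only [hn, mul_div_cancel_right₀ _ hω]⟩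

theorem setIntegral_mul_one_sub_cos_pos {h : ℝ → ℝ} {s : Set ℝ} {ω : ℝ} (hω : ω ≠ 0)
    (hh : IntegrableOn h s) (h0 : 0 ≤ᵐ[volume.restrict s] h) (hpos : 0 < ∫ t in s, h t) :
    0 < ∫ t in s, h t * (1 - cos (t * ω)) := by
  have h0' : 0 ≤ᵐ[volume.restrict s] fun t ↦ h t * (1 - cos (t * ω)) := by
    filter_upwards [h0] with t ht using mul_nonneg ht (sub_nonneg.mpr (cos_le_one _))
  have hint : IntegrableOn (fun t ↦ h t * (1 - cos (t * ω))) s := by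
    refine hh.mul_bdd (c := 2) (by fun_prop) (ae_of_all _ fun t ↦ ?_)
    rw [Real.norm_eq_abs, abs_le]
    constructor <;> linarith [cos_le_one (t * ω), neg_one_le_cos (t * ω)]
  rw [setIntegral_pos_iff_support_of_nonneg_ae h0 hh] at hpos
  rw [setIntegral_pos_iff_support_of_nonneg_ae h0' hint]
  refine hpos.trans_le (measure_mono_ae ?_)
  filter_upwards [ae_cos_mul_ne_one hω] with t ht ⟨hht, hts⟩
  exact ⟨mul_ne_zero hht (sub_ne_zero.mpr (Ne.symm ht)), hts⟩

theorem integral_sin_mul_right {ω : ℝ} (hω : ω ≠ 0) (t : ℝ) :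
    ∫ ρ in 0..t, sin (ρ * ω) = (1 - cos (t * ω)) / ω := by
  rw [intervalIntegral.integral_comp_mul_right sin hω, integral_sin, zero_mul, cos_zero,
    smul_eq_mul, inv_mul_eq_div]

theorem integral_mul_integral_Ioi_eq {h φ : ℝ → ℝ} (hh : IntegrableOn h (Ioi 0))
    (hφ : Continuous φ)
    (hint : IntegrableOn (fun ρ ↦ φ ρ * ∫ t in Ioi ρ, ‖h t‖) (Ioi 0)) :
    ∫ ρ in Ioi 0, φ ρ * ∫ t in Ioi ρ, h t = ∫ t in Ioi 0, h t * ∫ ρ in 0..t, φ ρ := by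
  set F : ℝ → ℝ → ℝ := fun ρ t ↦ {p : ℝ × ℝ | p.1 < p.2}.indicator (fun p ↦ φ p.1 * h p.2) (ρ, t)
  have hF_left (ρ : ℝ) : F ρ = (Ioi ρ).indicator fun t ↦ φ ρ * h t := rfl
  have hF_right (t : ℝ) : (fun ρ ↦ F ρ t) = (Iio t).indicator fun ρ ↦ φ ρ * h t := rfl
  have hIoi {ρ : ℝ} (hρ : ρ ∈ Ioi 0) : Ioi 0 ∩ Ioi ρ = Ioi ρ := by
    rw [Ioi_inter_Ioi, max_eq_right (le_of_lt hρ)]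
  have hF_int : Integrable (Function.uncurry F)
      ((volume.restrict (Ioi 0)).prod (volume.restrict (Ioi 0))) := by
    refine (integrable_prod_iff ?_).mpr ⟨ae_of_all _ fun ρ ↦ ?_, ?_⟩
    · exact ((hφ.comp continuous_fst).aestronglyMeasurable.mul
        hh.aestronglyMeasurable.comp_snd).indicator
        (measurableSet_lt measurable_fst measurable_snd)
    · exact (hh.const_mul (φ ρ)).indicator measurableSet_Ioi
    · refine hint.norm.congr ?_
      filter_upwards [ae_restrict_mem measurableSet_Ioi] with ρ hρ
      have hnorm : (fun t ↦ ‖F ρ t‖) = (Ioi ρ).indicator fun t ↦ ‖φ ρ‖ * ‖h t‖ := by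
        ext t
        rw [hF_left, norm_indicator_eq_indicator_norm]
        simp only [norm_mul]
      simp only [Function.uncurry_apply_pair, hnorm, setIntegral_indicator measurableSet_Ioi,
        hIoi hρ, integral_const_mul, norm_mul,
        Real.norm_of_nonneg (setIntegral_nonneg measurableSet_Ioi fun t _ ↦ norm_nonneg (h t))]
  calc ∫ ρ in Ioi 0, φ ρ * ∫ t in Ioi ρ, h t = ∫ ρ in Ioi 0, ∫ t in Ioi 0, F ρ t := by
        refine setIntegral_congr_fun measurableSet_Ioi fun ρ hρ ↦ ?_
        rw [hF_left, setIntegral_indicator measurableSet_Ioi, hIoi hρ, integral_const_mul]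
    _ = ∫ t in Ioi 0, ∫ ρ in Ioi 0, F ρ t := integral_integral_swap hF_int
    _ = ∫ t in Ioi 0, h t * ∫ ρ in 0..t, φ ρ := by
        refine setIntegral_congr_fun measurableSet_Ioi fun t ht ↦ ?_
        rw [hF_right, setIntegral_indicator measurableSet_Iio, Ioi_inter_Iio, integral_mul_const,
          mul_comm, intervalIntegral.integral_of_le (le_of_lt ht), integral_Ioc_eq_integral_Ioo]

theorem intervalIntegral_indicator_Ioi_zero (g : ℝ → ℝ) {x : ℝ} (hx : 0 ≤ x) :
    ∫ t in 0..x, (Ioi 0).indicator g t = ∫ t in 0..x, g t := by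
  refine intervalIntegral.integral_congr_ae (ae_of_all _ fun t ht ↦ ?_)
  rw [uIoc_of_le hx] at ht
  exact indicator_of_mem ht.1 g

section Primitive

variable {χ g : ℝ → ℝ} (hg : IntegrableOn g (Ioi 0))
  (hχ : ∀ x, 0 ≤ x → χ x = χ 0 + ∫ t in 0..x, g t)
include hg hχ

theorem continuousOn_Ici_of_eq_primitive : ContinuousOn χ (Ici 0) := by
  have hG := (integrable_indicator_iff measurableSet_Ioi).mpr hg
  refine ((continuous_const (y := χ 0)).add (intervalIntegral.continuous_primitive
    (fun _ _ ↦ hG.intervalIntegrable) 0)).continuousOn.congr fun x hx ↦ ?_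
  rw [hχ x hx, Pi.add_apply, intervalIntegral_indicator_Ioi_zero g hx]

theorem tendsto_atTop_of_eq_primitive :
    Tendsto χ atTop (𝓝 (χ 0 + ∫ t in Ioi 0, g t)) := by
  refine ((intervalIntegral_tendsto_integral_Ioi 0 hg tendsto_id).const_add (χ 0)).congr' ?_
  filter_upwards [eventually_ge_atTop 0] with x hx using (hχ x hx).symm

theorem tendsto_atTop_zero_of_eq_primitive (hint : IntegrableOn (fun ρ ↦ ρ * χ ρ) (Ioi 0)) :
    Tendsto χ atTop (𝓝 0) := by
  have h := tendsto_atTop_of_eq_primitive hg hχ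
  rwa [eq_zero_of_tendsto_of_integrableOn_Ioi h
    (integrableOn_Ioi_one_of_integrableOn_id_mul hint)] at h

theorem integral_Ioi_eq_neg_of_eq_primitive (hlim : Tendsto χ atTop (𝓝 0)) {ρ : ℝ}
    (hρ : 0 ≤ ρ) : ∫ t in Ioi ρ, g t = -χ ρ := by
  have hii (x : ℝ) (hx : 0 ≤ x) : IntervalIntegrable g volume 0 x :=
    (intervalIntegrable_iff_integrableOn_Ioc_of_le hx).mpr (hg.mono_set Ioc_subset_Ioi_self)
  have hlim' : Tendsto (fun x ↦ ∫ t in ρ..x, g t) atTop (𝓝 (0 - χ ρ)) := by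
    refine (hlim.sub_const (χ ρ)).congr' ?_
    filter_upwards [eventually_ge_atTop ρ] with x hx
    rw [← intervalIntegral.integral_interval_sub_left (hii x (hρ.trans hx)) (hii ρ hρ),
      hχ x (hρ.trans hx), hχ ρ hρ]
    ring
  rw [zero_sub] at hlim'
  exact tendsto_nhds_unique
    (intervalIntegral_tendsto_integral_Ioi ρ (hg.mono_set (Ioi_subset_Ioi hρ)) tendsto_id) hlim'

theorem ae_nonpos_of_antitoneOn_primitive (hmono : AntitoneOn χ (Ici 0)) :
    ∀ᵐ t ∂volume.restrict (Ioi 0), g t ≤ 0 := by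
  have hG := (integrable_indicator_iff measurableSet_Ioi).mpr hg
  rw [ae_restrict_iff' measurableSet_Ioi]
  filter_upwards [LocallyIntegrable.ae_hasDerivAt_integral hG.locallyIntegrable] with x hx hx0
  have hderiv : HasDerivAt χ (g x) x := by
    rw [← indicator_of_mem hx0 g]
    refine ((hx 0).const_add (χ 0)).congr_of_eventuallyEq ?_
    filter_upwards [Ioi_mem_nhds hx0] with y hy
    rw [hχ y (le_of_lt hy), intervalIntegral_indicator_Ioi_zero g (le_of_lt hy)]
  exact hderiv.hasDerivWithinAt.nonpos_of_antitoneOn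
    ((uniqueDiffOn_Ici 0 x (mem_Ici.mpr (le_of_lt hx0))).accPt) hmono

theorem integral_Ioi_norm_eq_of_antitoneOn_primitive (hmono : AntitoneOn χ (Ici 0))
    (hlim : Tendsto χ atTop (𝓝 0)) {ρ : ℝ} (hρ : 0 ≤ ρ) : ∫ t in Ioi ρ, ‖g t‖ = χ ρ := by
  rw [← neg_neg (χ ρ), ← integral_Ioi_eq_neg_of_eq_primitive hg hχ hlim hρ, ← integral_neg]
  refine setIntegral_congr_ae measurableSet_Ioi ?_
  filter_upwards [(ae_restrict_iff' measurableSet_Ioi).mp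
    (ae_nonpos_of_antitoneOn_primitive hg hχ hmono)] with t ht hρt
  exact Real.norm_of_nonpos (ht (hρ.trans_lt hρt))

theorem integral_mul_sin_eq_of_antitoneOn_primitive (hmono : AntitoneOn χ (Ici 0))
    (hint : IntegrableOn (fun ρ ↦ ρ * χ ρ) (Ioi 0)) {ω : ℝ} (hω : ω ≠ 0) :
    ∫ ρ in Ioi 0, χ ρ * sin (ρ * ω) = (∫ t in Ioi 0, -g t * (1 - cos (t * ω))) / ω := by
  have hlim := tendsto_atTop_zero_of_eq_primitive hg hχ hint
  have htail {ρ : ℝ} (hρ : 0 ≤ ρ) : ∫ t in Ioi ρ, -g t = χ ρ := by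
    rw [integral_neg, integral_Ioi_eq_neg_of_eq_primitive hg hχ hlim hρ, neg_neg]
  have hfubini := integral_mul_integral_Ioi_eq (h := fun t ↦ -g t) (φ := fun ρ ↦ sin (ρ * ω))
    hg.neg (by fun_prop) ((integrableOn_mul_sin_of_integrableOn_id_mul hint ω).congr_fun
      (fun ρ hρ ↦ by simp only [norm_neg,
        integral_Ioi_norm_eq_of_antitoneOn_primitive hg hχ hmono hlim (le_of_lt hρ), mul_comm])
      measurableSet_Ioi)
  calc ∫ ρ in Ioi 0, χ ρ * sin (ρ * ω)
      = ∫ ρ in Ioi 0, sin (ρ * ω) * ∫ t in Ioi ρ, -g t :=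
        setIntegral_congr_fun measurableSet_Ioi fun ρ hρ ↦ by rw [htail (le_of_lt hρ), mul_comm]
    _ = ∫ t in Ioi 0, -g t * ((1 - cos (t * ω)) / ω) := by
        simp only [hfubini, integral_sin_mul_right hω]
    _ = _ := by simp only [← mul_div_assoc, integral_div]

end Primitive

/-- a non-negative, non-increasing cut-off profile `χ̆ ∈ W¹₁(0,∞)`
with `χ̆(0) = 1` and `ρχ̆(ρ) ∈ L¹(0,∞)` belongs to the class `X¹₊`:
(a) `∫₀^∞ ρχ̆(ρ) dρ > 0`, and (b) for every `ω ≠ 0` the integral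
`∫₀^∞ χ̆(ρ) sin(ρω) dρ` converges absolutely and `(1/ω)∫₀^∞ χ̆(ρ) sin(ρω) dρ > 0`.
(Absolute continuity with `L¹` derivative is encoded by the existence of an
integrable `g` with `χ̆(x) = χ̆(0) + ∫₀^x g`.) -/
theorem stmt18 (χ : ℝ → ℝ)
    (hW : ∃ g : ℝ → ℝ, IntegrableOn g (Set.Ioi (0 : ℝ)) ∧
      ∀ x : ℝ, 0 ≤ x → χ x = χ 0 + ∫ t in (0 : ℝ)..x, g t)
    (h0 : χ 0 = 1)
    (hnn : ∀ ρ : ℝ, 0 ≤ ρ → 0 ≤ χ ρ)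
    (hmono : AntitoneOn χ (Set.Ici (0 : ℝ)))
    (hint : IntegrableOn (fun ρ => ρ * χ ρ) (Set.Ioi (0 : ℝ))) :
    (0 < ∫ ρ in Set.Ioi (0 : ℝ), ρ * χ ρ) ∧
    ∀ ω : ℝ, ω ≠ 0 →
      IntegrableOn (fun ρ => χ ρ * Real.sin (ρ * ω)) (Set.Ioi (0 : ℝ)) ∧
      0 < (1 / ω) * ∫ ρ in Set.Ioi (0 : ℝ), χ ρ * Real.sin (ρ * ω) := by
  obtain ⟨g, hg, hχ⟩ := hW
  refine ⟨setIntegral_Ioi_id_mul_pos (h0 ▸ one_pos)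
    ((continuousOn_Ici_of_eq_primitive hg hχ 0 self_mem_Ici).mono Ioi_subset_Ici_self) hnn hint,
    fun ω hω ↦ ⟨integrableOn_mul_sin_of_integrableOn_id_mul hint ω, ?_⟩⟩
  have hg_nonpos := ae_nonpos_of_antitoneOn_primitive hg hχ hmono
  have hg_mass : ∫ t in Ioi 0, -g t = 1 := by
    rw [integral_neg, integral_Ioi_eq_neg_of_eq_primitive hg hχ
      (tendsto_atTop_zero_of_eq_primitive hg hχ hint) le_rfl, h0, neg_neg]
  have hpos := setIntegral_mul_one_sub_cos_pos (h := fun t ↦ -g t) hω hg.neg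
    (by filter_upwards [hg_nonpos] with t ht using neg_nonneg.mpr ht) (hg_mass ▸ one_pos)
  rw [integral_mul_sin_eq_of_antitoneOn_primitive hg hχ hmono hint hω, one_div,
    ← div_eq_inv_mul, div_div]
  exact div_pos hpos (mul_self_pos.mpr hω)
end
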